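/- Suppose V is a finite-dimensional (g ⊗ A)^Γ-module that is annihilated by both (g ⊗ I_η)^Γ and (g ⊗ I_{η'})^Γ for finitely supported functions η, η' : X_rat → ℕ with Supp η ∪ Supp η' contained in some element of X_*. Then the (g ⊗ A)-module structures V^η and V^{η'} on V coincide, where V^η is defined via the composition g ⊗ A ↠ (g ⊗ A)/(g ⊗ I_η) ≅ (g ⊗ A)^Γ/(g ⊗ I_η)^Γ → End V. -/

import Mathlib

/-!
Both `V^η` and `V^{η'}` let `x` act as any `Γ`-fixed `y` congruent to `x` modulo `g ⊗ I_η`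
(resp. `g ⊗ I_{η'}`), so it suffices to find one fixed `z` congruent to `x` modulo
`g ⊗ I_{η+η'} = g ⊗ I_η I_{η'}`. Since `Γ` acts freely and `Supp (η + η')` meets each orbit at
most once, `I_{η+η'}` is coprime to each of its nontrivial translates; hence some `e` satisfies
`e ≡ 1` and `γ • e ≡ 0` modulo `I_{η+η'}` for `γ ≠ 1`, and the average `z = ∑_γ γ • (e • x)`
does the job.
-/
set_option linter.unusedSectionVars false

open scoped TensorProduct

noncomputable section

/-- The action of a group element on the maximal spectrum of `A`
(so that `m_{γ·x} = comap (γ⁻¹ • ·) m_x`). -/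
def gammaDot (A Γ : Type*) [CommRing A] [Group Γ] [MulSemiringAction Γ A]
    (γ : Γ) (x : MaximalSpectrum A) : MaximalSpectrum A :=
  ⟨Ideal.comap (MulSemiringAction.toRingHom Γ A γ⁻¹) x.asIdeal, by
    have := x.isMaximal
    exact Ideal.comap_isMaximal_of_surjective _ (MulAction.surjective γ⁻¹)⟩

/-- A finite set of points of `X` containing no two (distinct) points in the same
`Γ`-orbit, i.e. an element of `X_*`. -/
def NoTwoInOrbit (A Γ : Type*) [CommRing A] [Group Γ] [MulSemiringAction Γ A]
    (s : Finset (MaximalSpectrum A)) : Prop :=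
  ∀ x ∈ s, ∀ y ∈ s, ∀ γ : Γ, gammaDot A Γ γ x = y → x = y

/-- The ideal `I_η = ∏_{x ∈ Supp η} m_x ^ η x` of `A`. -/
def idealOf {A : Type*} [CommRing A] (η : MaximalSpectrum A →₀ ℕ) : Ideal A :=
  η.support.prod fun x => x.asIdeal ^ η x

variable (k A g Γ : Type*)
variable [Field k] [IsAlgClosed k] [CharZero k]
variable [CommRing A] [Algebra k A] [Algebra.FiniteType k A]
variable [LieRing g] [LieAlgebra k g] [Module.Finite k g] [LieAlgebra.IsSemisimple k g]
variable [CommGroup Γ] [Fintype Γ]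
variable [MulSemiringAction Γ A] [SMulCommClass Γ k A]
variable [DistribMulAction Γ g] [SMulCommClass Γ k g]

/-- The `k`-submodule `g ⊗ I` of `A ⊗[k] g` determined by an ideal `I ⊆ A`. -/
def gT (I : Ideal A) : Submodule k (A ⊗[k] g) :=
  Submodule.span k {z | ∃ f ∈ I, ∃ v : g, z = f ⊗ₜ[k] v}

/-- The diagonal action of `γ ∈ Γ` on `A ⊗[k] g` as a `k`-linear map. -/
def diagMap (γ : Γ) : (A ⊗[k] g) →ₗ[k] A ⊗[k] g :=
  TensorProduct.map (DistribMulAction.toLinearMap k A γ) (DistribMulAction.toLinearMap k g γ)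

/-- The set of `Γ`-fixed points of `A ⊗[k] g`, i.e. the equivariant map algebra
`(g ⊗ A)^Γ`, as a `k`-submodule. -/
def fixedSub : Submodule k (A ⊗[k] g) :=
  ⨅ γ : Γ, LinearMap.ker (diagMap k A g Γ γ - LinearMap.id)

lemma mem_fixedSub {z : A ⊗[k] g} :
    z ∈ fixedSub k A g Γ ↔ ∀ γ : Γ, diagMap k A g Γ γ z = z := by
  simp [fixedSub, sub_eq_zero, LinearMap.sub_apply]

/-- `A ⊗[k] g` is a Lie algebra over `k` (by restriction of scalars from `A`). -/
instance : LieAlgebra k (A ⊗[k] g) where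
  lie_smul t x y := by
    rw [← algebraMap_smul A t y, lie_smul, algebraMap_smul]

lemma diagMap_lie (hbr : ∀ (γ : Γ) (x y : g), γ • ⁅x, y⁆ = ⁅γ • x, γ • y⁆) (γ : Γ)
    (z w : A ⊗[k] g) :
    diagMap k A g Γ γ ⁅z, w⁆ = ⁅diagMap k A g Γ γ z, diagMap k A g Γ γ w⁆ := by
  induction z using TensorProduct.induction_on with
  | zero => simp
  | tmul a v =>
    induction w using TensorProduct.induction_on with
    | zero => simp
    | tmul b u =>
      rw [LieAlgebra.ExtendScalars.bracket_tmul]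
      simp only [diagMap, TensorProduct.map_tmul, DistribSMul.toLinearMap_apply]
      rw [LieAlgebra.ExtendScalars.bracket_tmul]
      change (γ • (a * b)) ⊗ₜ[k] (γ • ⁅v, u⁆) = ((γ • a) * (γ • b)) ⊗ₜ[k] ⁅γ • v, γ • u⁆
      rw [smul_mul', hbr]
    | add w1 w2 h1 h2 => rw [lie_add, map_add, h1, h2, map_add, lie_add]
  | add z1 z2 h1 h2 => rw [add_lie, map_add, h1, h2, map_add, add_lie]

/-- The equivariant map algebra `(g ⊗ A)^Γ` as a Lie subalgebra of `A ⊗[k] g`. -/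
def fixedLie (hbr : ∀ (γ : Γ) (x y : g), γ • ⁅x, y⁆ = ⁅γ • x, γ • y⁆) :
    LieSubalgebra k (A ⊗[k] g) :=
  { fixedSub k A g Γ with
    lie_mem' := by
      intro x y hx hy
      have hx' : x ∈ fixedSub k A g Γ := hx
      have hy' : y ∈ fixedSub k A g Γ := hy
      show ⁅x, y⁆ ∈ fixedSub k A g Γ
      rw [mem_fixedSub] at hx' hy' ⊢
      intro γ
      rw [diagMap_lie k A g Γ hbr, hx' γ, hy' γ] }

/-- `g ⊗ I` as a Lie ideal of `A ⊗[k] g`. -/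
def gTLie (I : Ideal A) : LieIdeal k (A ⊗[k] g) :=
  { gT k A g I with
    lie_mem := by
      intro x m hm
      have hm' : m ∈ gT k A g I := hm
      show ⁅x, m⁆ ∈ gT k A g I
      clear hm
      induction hm' using Submodule.span_induction with
      | mem z hz =>
        obtain ⟨f, hf, v, rfl⟩ := hz
        induction x using TensorProduct.induction_on with
        | zero => rw [zero_lie]; exact (gT k A g I).zero_mem
        | tmul a w =>
          rw [LieAlgebra.ExtendScalars.bracket_tmul]
          exact Submodule.subset_span ⟨a * f, I.mul_mem_left a hf, ⁅w, v⁆, rfl⟩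
        | add x1 x2 h1 h2 => rw [add_lie]; exact (gT k A g I).add_mem h1 h2
      | zero => rw [lie_zero]; exact (gT k A g I).zero_mem
      | add z w _ _ h1 h2 => rw [lie_add]; exact (gT k A g I).add_mem h1 h2
      | smul c z _ h => rw [lie_smul]; exact (gT k A g I).smul_mem c h }

variable {k A g Γ} in
/-- `(g ⊗ I)^Γ` as a Lie ideal of the equivariant map algebra `(g ⊗ A)^Γ`. -/
def fixedIdealOf (hbr : ∀ (γ : Γ) (x y : g), γ • ⁅x, y⁆ = ⁅γ • x, γ • y⁆) (I : Ideal A) :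
    LieIdeal k ↥(fixedLie k A g Γ hbr) where
  carrier := {y | (y : A ⊗[k] g) ∈ gT k A g I}
  add_mem' := fun ha hb => (gT k A g I).add_mem ha hb
  zero_mem' := (gT k A g I).zero_mem
  smul_mem' := fun c y hy => by
    simpa using (gT k A g I).smul_mem c hy
  lie_mem := fun {x m} hm => (gTLie k A g I).lie_mem hm

section IdealOf

variable {A : Type*} [CommRing A]

lemma idealOf_add (η η' : MaximalSpectrum A →₀ ℕ) :
    idealOf (η + η') = idealOf η * idealOf η' :=
  Finsupp.prod_add_index' (fun _ => pow_zero _) (fun _ _ _ => pow_add _ _ _)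

lemma exists_mem_support_asIdeal_eq_of_idealOf_le (η : MaximalSpectrum A →₀ ℕ) {m : Ideal A}
    [hm : m.IsMaximal] (h : idealOf η ≤ m) : ∃ x ∈ η.support, x.asIdeal = m := by
  obtain ⟨x, hx, hle⟩ := hm.isPrime.prod_le.mp h
  exact ⟨x, hx, x.isMaximal.eq_of_le hm.ne_top (hm.isPrime.le_of_pow_le hle)⟩

end IdealOf

section Translates

variable {A Γ : Type*} [CommRing A] [Group Γ] [MulSemiringAction Γ A]

/-- A maximal ideal containing `I_ν` and its translate by `γ` would be `m_x` with `x` and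
`γ • x` both in `Supp ν`. -/
lemma isCoprime_idealOf_comap
    (hfree : ∀ γ : Γ, γ ≠ 1 → ∀ x : MaximalSpectrum A, gammaDot A Γ γ x ≠ x)
    {ν : MaximalSpectrum A →₀ ℕ} (hsupp : NoTwoInOrbit A Γ ν.support) {γ : Γ} (hγ : γ ≠ 1) :
    IsCoprime (idealOf ν) ((idealOf ν).comap (MulSemiringAction.toRingHom Γ A γ)) := by
  rw [Ideal.isCoprime_iff_sup_eq]
  by_contra hne
  obtain ⟨m, hm, hle⟩ := Ideal.exists_le_maximal _ hne
  obtain ⟨x, hx, rfl⟩ := exists_mem_support_asIdeal_eq_of_idealOf_le ν (le_sup_left.trans hle)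
  have htranslate : idealOf ν ≤ (gammaDot A Γ γ x).asIdeal := fun a ha =>
    le_sup_right.trans hle (show γ • γ⁻¹ • a ∈ idealOf ν by rwa [smul_inv_smul])
  obtain ⟨y, hy, hxy⟩ := exists_mem_support_asIdeal_eq_of_idealOf_le ν htranslate
  have hγx : gammaDot A Γ γ x = y := MaximalSpectrum.ext hxy.symm
  exact hfree γ hγ x (hγx.trans (hsupp x hx y hy γ hγx).symm)

lemma exists_sub_one_mem_and_smul_mem [Fintype Γ] {I : Ideal A}
    (hI : ∀ γ : Γ, γ ≠ 1 → IsCoprime I (I.comap (MulSemiringAction.toRingHom Γ A γ))) :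
    ∃ e : A, e - 1 ∈ I ∧ ∀ γ : Γ, γ ≠ 1 → γ • e ∈ I := by
  classical
  have hcop : IsCoprime I
      (∏ γ ∈ Finset.univ.erase 1, I.comap (MulSemiringAction.toRingHom Γ A γ)) :=
    IsCoprime.prod_right fun γ hγ => hI γ (Finset.ne_of_mem_erase hγ)
  obtain ⟨i, hi, e, he, hie⟩ := Ideal.isCoprime_iff_exists.mp hcop
  refine ⟨e, by simpa [← hie] using neg_mem hi, fun γ hγ => ?_⟩
  exact Ideal.prod_le_inf.trans (Finset.inf_le (Finset.mem_erase.mpr ⟨hγ, Finset.mem_univ γ⟩)) he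

end Translates

section EquivariantMapAlgebra

variable {k A g Γ}

lemma gT_mono {I J : Ideal A} (h : I ≤ J) : gT k A g I ≤ gT k A g J :=
  Submodule.span_mono fun _ ⟨f, hf, v, hz⟩ => ⟨f, h hf, v, hz⟩

lemma smul_mem_gT {I : Ideal A} {f : A} (hf : f ∈ I) (z : A ⊗[k] g) : f • z ∈ gT k A g I := by
  induction z with
  | zero => simp [(gT k A g I).zero_mem]
  | tmul a v =>
    exact Submodule.subset_span ⟨f * a, I.mul_mem_right a hf, v, TensorProduct.smul_tmul' f a v⟩
  | add z w hz hw => rw [smul_add]; exact add_mem hz hw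

@[simp]
lemma diagMap_tmul (γ : Γ) (a : A) (v : g) :
    diagMap k A g Γ γ (a ⊗ₜ[k] v) = (γ • a) ⊗ₜ[k] (γ • v) :=
  rfl

lemma diagMap_smul (γ : Γ) (a : A) (z : A ⊗[k] g) :
    diagMap k A g Γ γ (a • z) = (γ • a) • diagMap k A g Γ γ z := by
  induction z with
  | zero => simp
  | tmul b v => simp [TensorProduct.smul_tmul', smul_mul']
  | add z w hz hw => rw [smul_add, map_add, hz, hw, map_add, smul_add]

lemma diagMap_mul (δ γ : Γ) (z : A ⊗[k] g) :
    diagMap k A g Γ δ (diagMap k A g Γ γ z) = diagMap k A g Γ (δ * γ) z := by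
  induction z with
  | zero => simp
  | tmul a v => simp [mul_smul]
  | add z w hz hw => rw [map_add, map_add, hz, hw, map_add]

lemma diagMap_one (z : A ⊗[k] g) : diagMap k A g Γ 1 z = z := by
  induction z with
  | zero => simp
  | tmul a v => simp
  | add z w hz hw => rw [map_add, hz, hw]

lemma sum_diagMap_mem_fixedSub (w : A ⊗[k] g) : ∑ γ : Γ, diagMap k A g Γ γ w ∈ fixedSub k A g Γ :=
  (mem_fixedSub k A g Γ).mpr fun δ => by
    simp only [map_sum, diagMap_mul]
    exact Fintype.sum_equiv (Equiv.mulLeft δ) _ _ fun _ => rfl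

lemma exists_mem_fixedSub_sub_mem_gT {I : Ideal A}
    (hI : ∀ γ : Γ, γ ≠ 1 → IsCoprime I (I.comap (MulSemiringAction.toRingHom Γ A γ)))
    (x : A ⊗[k] g) : ∃ z ∈ fixedSub k A g Γ, z - x ∈ gT k A g I := by
  classical
  obtain ⟨e, he_one, he_smul⟩ := exists_sub_one_mem_and_smul_mem hI
  refine ⟨∑ γ : Γ, diagMap k A g Γ γ (e • x), sum_diagMap_mem_fixedSub _, ?_⟩
  have hsplit : ∑ γ : Γ, diagMap k A g Γ γ (e • x) - x =
      (e - 1) • x + ∑ γ ∈ Finset.univ.erase 1, (γ • e) • diagMap k A g Γ γ x := by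
    rw [← Finset.add_sum_erase _ _ (Finset.mem_univ 1), diagMap_one, sub_smul, one_smul]
    simp only [diagMap_smul]
    abel
  rw [hsplit]
  exact add_mem (smul_mem_gT he_one x) (Submodule.sum_mem _ fun γ hγ =>
    smul_mem_gT (he_smul γ (Finset.ne_of_mem_erase hγ)) _)

end EquivariantMapAlgebra

lemma LieSubalgebra.lie_eq_of_coe_sub_mem {R L M : Type*} [CommRing R] [LieRing L]
    [LieAlgebra R L] {L' : LieSubalgebra R L} [AddCommGroup M] [LieRingModule L' M]
    {S : Submodule R L} (hann : ∀ y : L', (y : L) ∈ S → ∀ m : M, ⁅y, m⁆ = 0) {y z : L'}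
    (h : (y : L) - z ∈ S) (m : M) : ⁅y, m⁆ = ⁅z, m⁆ := by
  rw [← sub_eq_zero, ← sub_lie]
  exact hann (y - z) h m

theorem statement6
    (hbr : ∀ (γ : Γ) (x y : g), γ • ⁅x, y⁆ = ⁅γ • x, γ • y⁆)
    (hfree : ∀ γ : Γ, γ ≠ 1 → ∀ x : MaximalSpectrum A, gammaDot A Γ γ x ≠ x)
    (η η' : MaximalSpectrum A →₀ ℕ)
    (hsupp : NoTwoInOrbit A Γ (η + η').support)
    (V : Type*) [AddCommGroup V]
    [LieRingModule ↥(fixedLie k A g Γ hbr) V]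
    (hann : ∀ y : ↥(fixedLie k A g Γ hbr), (y : A ⊗[k] g) ∈ gT k A g (idealOf η) →
      ∀ v : V, ⁅y, v⁆ = 0)
    (hann' : ∀ y : ↥(fixedLie k A g Γ hbr), (y : A ⊗[k] g) ∈ gT k A g (idealOf η') →
      ∀ v : V, ⁅y, v⁆ = 0) :
    ∀ (x : A ⊗[k] g) (y y' : ↥(fixedLie k A g Γ hbr)),
      (y : A ⊗[k] g) - x ∈ gT k A g (idealOf η) →
      (y' : A ⊗[k] g) - x ∈ gT k A g (idealOf η') →
      ∀ v : V, ⁅y, v⁆ = ⁅y', v⁆ := by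
  intro x y y' hy hy' v
  obtain ⟨z, hz_fixed, hz⟩ :=
    exists_mem_fixedSub_sub_mem_gT (g := g) (fun γ hγ => isCoprime_idealOf_comap hfree hsupp hγ) x
  let z' : fixedLie k A g Γ hbr := ⟨z, hz_fixed⟩
  have hyz : (y : A ⊗[k] g) - z ∈ gT k A g (idealOf η) :=
    sub_sub_sub_cancel_right (y : A ⊗[k] g) z x ▸
      sub_mem hy (gT_mono (idealOf_add η η' ▸ Ideal.mul_le_left) hz)
  have hy'z : (y' : A ⊗[k] g) - z ∈ gT k A g (idealOf η') :=
    sub_sub_sub_cancel_right (y' : A ⊗[k] g) z x ▸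
      sub_mem hy' (gT_mono (idealOf_add η η' ▸ Ideal.mul_le_right) hz)
  exact (LieSubalgebra.lie_eq_of_coe_sub_mem hann (z := z') hyz v).trans
    (LieSubalgebra.lie_eq_of_coe_sub_mem hann' (z := z') hy'z v).symm

end
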